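/- arXiv:2604.22246 — 2 statements merged into one kernel-verified Lean document; each statement's English description precedes it below -/
import Mathlib

section
/- Let V be a real vector space with a symmetric bilinear form Q, let C, ω, α ∈ V, and let k > 0 be a real number. Define Z(k) := ½k²(ω² − α²) + i·k²(ω.α) and Z''(k) := ½(k²ω² − (kα + C)²) + i·k·(ω.(kα + C)). Assume ω.α < 0 and ω.(kα + C) < 0 (so both −Z(k) and −Z''(k) lie in the open upper half-plane). Then arg(−Z(k)) < arg(−Z''(k)) if and only if (C.ω)(ω² − α²) + (2(C.α) + C²/k)(ω.α) > 0. -/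
/-! Both `-Z(k)` and `-Z''(k)` lie in the open upper half-plane, where arguments are compared by
the sign of a cross product. Expanding the bilinear form, the cross product of `-Z(k)` and
`-Z''(k)` is `k³/2` times the stated expression. -/

open Complex ComplexConjugate Real

/- `arg z - arg w = arg (z * conj w)`, whose sign is that of its imaginary part. -/
theorem Complex.arg_lt_arg_iff_of_im_pos {z w : ℂ} (hz : 0 < z.im) (hw : 0 < w.im) :
    arg z < arg w ↔ w.re * z.im < z.re * w.im := by
  have hz0 : z ≠ 0 := fun h => hz.ne' (by simp [h])
  have hw0 : w ≠ 0 := fun h => hw.ne' (by simp [h])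
  have harg_conj : arg (conj w) = -arg w := by
    rw [arg_conj, if_neg fun h => hw.ne' (arg_eq_pi_iff.mp h).2]
  have hsum : arg z + arg (conj w) ∈ Set.Ioc (-π) π := by
    rw [harg_conj]
    constructor <;> linarith [arg_le_pi z, arg_lt_pi_iff.mpr (Or.inr hw.ne'),
      arg_nonneg_iff.mpr hw.le, arg_nonneg_iff.mpr hz.le]
  have hmul : arg (z * conj w) = arg z - arg w := by
    rw [arg_mul hz0 ((map_ne_zero _).mpr hw0) hsum, harg_conj, sub_eq_add_neg]
  rw [← sub_neg, ← hmul, arg_neg_iff, mul_im, conj_re, conj_im]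
  constructor <;> intro h <;> linarith

theorem LinearMap.apply_smul_add_self_of_symm {V : Type*} [AddCommGroup V] [Module ℝ V]
    {Q : V →ₗ[ℝ] V →ₗ[ℝ] ℝ} (hQ : ∀ v w, Q v w = Q w v) (k : ℝ) (a c : V) :
    Q (k • a + c) (k • a + c) = k ^ 2 * Q a a + 2 * k * Q c a + Q c c := by
  simp only [map_add, map_smul, LinearMap.add_apply, LinearMap.smul_apply, smul_eq_mul, hQ a c]
  ring

/-- With `Z(k), Z''(k)` as in the Bridgeland phase comparison, `k > 0`,
`ω.α < 0`, and `ω.(kα + C) < 0`, we have `arg(-Z(k)) < arg(-Z''(k))` iff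
`(C.ω)(ω² - α²) + (2(C.α) + C²/k)(ω.α) > 0`. -/
theorem stmt_8 {V : Type*} [AddCommGroup V] [Module ℝ V]
    (Q : V →ₗ[ℝ] V →ₗ[ℝ] ℝ) (hQ : ∀ v w, Q v w = Q w v)
    (C ω α : V) (k : ℝ) (hk : 0 < k)
    (Z Z'' : ℂ)
    (hZ : Z = ((1 / 2 : ℝ) * k ^ 2 * (Q ω ω - Q α α) : ℝ) +
      (k ^ 2 * Q ω α : ℝ) * Complex.I)
    (hZ'' : Z'' = ((1 / 2 : ℝ) * (k ^ 2 * Q ω ω - Q (k • α + C) (k • α + C)) : ℝ) +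
      (k * Q ω (k • α + C) : ℝ) * Complex.I)
    (h1 : Q ω α < 0) (h2 : Q ω (k • α + C) < 0) :
    Complex.arg (-Z) < Complex.arg (-Z'') ↔
      0 < Q C ω * (Q ω ω - Q α α) + (2 * Q C α + Q C C / k) * Q ω α := by
  have hZ_im : 0 < (-Z).im := by
    simp only [hZ, neg_im, add_im, ofReal_im, mul_im, ofReal_re, I_re, I_im]
    nlinarith [pow_pos hk 2]
  have hZ''_im : 0 < (-Z'').im := by
    simp only [hZ'', neg_im, add_im, ofReal_im, mul_im, ofReal_re, I_re, I_im]
    nlinarith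
  have hωC : Q ω (k • α + C) = k * Q ω α + Q C ω := by
    simp only [map_add, map_smul, smul_eq_mul, hQ ω C]
  have cross : (-Z).re * (-Z'').im - (-Z'').re * (-Z).im =
      k ^ 3 / 2 * (Q C ω * (Q ω ω - Q α α) + (2 * Q C α + Q C C / k) * Q ω α) := by
    simp only [hZ, hZ'', neg_re, neg_im, add_re, add_im, ofReal_re, ofReal_im, mul_re, mul_im,
      I_re, I_im, hωC, LinearMap.apply_smul_add_self_of_symm hQ]
    field_simp
    ring
  rw [arg_lt_arg_iff_of_im_pos hZ_im hZ''_im, ← sub_pos, cross]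
  exact mul_pos_iff_of_pos_left (by positivity)
end

section
/- Let Q be the symmetric bilinear form on ℝ² defined by Q((x₁,y₁),(x₂,y₂)) = x₁x₂ − y₁y₂, and set ω := (2/√3, −1/√3), α := (1,0). Let a, b be real numbers with b > a ≥ 0, set C := (a,b), and let k ≥ 1 be a real number. Then C² < 0 and (C.ω)(ω² − α²) + (2(C.α) − C²/k)(ω.α) = (2a + (b² − a²)/k)·(2/√3) > 0, where v.w := Q(v,w) and v² := Q(v,v). -/
/-!
Both `ω` and `α` have square `1` (`4/3 - 1/3 = 1`), so the term `(C.ω)(ω² - α²)` vanishes and the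
quantity reduces to `(2(C.α) - C²/k)(ω.α) = (2a + (b² - a²)/k)·(2/√3)`. Since `0 ≤ a < b` gives
`a² < b²`, the square `C² = a² - b²` is negative, while for `k > 0` the summands of
`2a + (b² - a²)/k` are nonnegative and positive respectively.
-/

lemma two_div_sqrt_three_sq_sub_neg_one_div_sqrt_three_sq :
    (2 / Real.sqrt 3) * (2 / Real.sqrt 3) - (-1 / Real.sqrt 3) * (-1 / Real.sqrt 3) = 1 := by
  have h3 : Real.sqrt 3 * Real.sqrt 3 = 3 := Real.mul_self_sqrt (by norm_num)
  field_simp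
  linarith

lemma scaled_phase_eq_of_self_eq {Q : ℝ × ℝ → ℝ × ℝ → ℝ} {ω α : ℝ × ℝ} (h : Q ω ω = Q α α)
    (C : ℝ × ℝ) (k : ℝ) :
    Q C ω * (Q ω ω - Q α α) + (2 * Q C α - Q C C / k) * Q ω α
      = (2 * Q C α - Q C C / k) * Q ω α := by
  rw [h, sub_self, mul_zero, zero_add]

lemma two_mul_add_sq_sub_sq_div_pos {a b k : ℝ} (ha : 0 ≤ a) (hab : a ^ 2 < b ^ 2) (hk : 0 < k) :
    0 < 2 * a + (b ^ 2 - a ^ 2) / k := by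
  have : 0 < (b ^ 2 - a ^ 2) / k := div_pos (sub_pos.mpr hab) hk
  linarith

/-- On `ℝ²` with `Q((x₁,y₁),(x₂,y₂)) = x₁x₂ - y₁y₂`,
`ω = (2/√3, -1/√3)`, `α = (1,0)`, and `C = (a,b)` with `b > a ≥ 0`, for any real
`k ≥ 1` we have `C² < 0` and
`(C.ω)(ω² - α²) + (2(C.α) - C²/k)(ω.α) = (2a + (b² - a²)/k)·(2/√3) > 0`. -/
theorem stmt_17 (Q : ℝ × ℝ → ℝ × ℝ → ℝ)
    (hQ : ∀ v w : ℝ × ℝ, Q v w = v.1 * w.1 - v.2 * w.2)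
    (ω α : ℝ × ℝ)
    (hω : ω = (2 / Real.sqrt 3, -1 / Real.sqrt 3))
    (hα : α = (1, 0))
    (a b : ℝ) (hab : a < b) (ha : 0 ≤ a)
    (C : ℝ × ℝ) (hC : C = (a, b))
    (k : ℝ) (hk : 1 ≤ k) :
    Q C C < 0 ∧
      Q C ω * (Q ω ω - Q α α) + (2 * Q C α - Q C C / k) * Q ω α
        = (2 * a + (b ^ 2 - a ^ 2) / k) * (2 / Real.sqrt 3) ∧
      0 < (2 * a + (b ^ 2 - a ^ 2) / k) * (2 / Real.sqrt 3) := by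
  have hsq : a ^ 2 < b ^ 2 := pow_lt_pow_left₀ hab ha two_ne_zero
  have hωα : Q ω ω = Q α α := by
    simp only [hQ, hω, hα, two_div_sqrt_three_sq_sub_neg_one_div_sqrt_three_sq]
    norm_num
  refine ⟨?_, ?_, ?_⟩
  · rw [hQ, hC, ← sq, ← sq]
    linarith
  · rw [scaled_phase_eq_of_self_eq hωα]
    simp only [hQ, hC, hω, hα]
    ring
  · exact mul_pos (two_mul_add_sq_sub_sq_div_pos ha hsq (by linarith)) (by positivity)
end
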